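/- Let μ be the Gauss measure, μ(A) = (1/log 2)∫_A dx/(1+x) on [0,1). For every positive integer λ, with τ = (λ+√(λ²+4))/2, there exist constants c₋, c₊ > 0 such that for all k ≥ 1, c₋ τ^{−2k} ≤ μ(Δ_k(λ)) ≤ c₊ τ^{−2k}. In fact one may take c₋ = τ/(2 log 2 · (τ+1)) and c₊ = (λ²+4)τ/((τ+1)λ² log 2). -/

import Mathlib

/-! Up to the (countable) set of rationals, `Δ_k(λ)` is the image of `(0,1)` under the `k`-th
iterate of the inverse branch `x ↦ 1/(λ + x)` of the Gauss map, an interval with endpoints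
`q_{k-1}/q_k` and `(q_{k-1} + q_{k-2})/(q_k + q_{k-1})`, where `q_{n+1} = λ q_n + q_{n-1}`.
Solutions of this recurrence have constant Wronskian up to sign, so the interval has length
`1/(q_k (q_k + q_{k-1}))`; comparing them with the solution `τ^n` squeezes both factors between
constant multiples of `τ^k`. The Gauss density lies between `1/(2 log 2)` and `1/log 2` on
`[0,1)`, which turns the length into the two bounds. -/

open Real
/-- One step of the Gauss map iteration: `gaussIter n x = G^n(x)` where `G y = {1/y}`. -/
noncomputable def gaussIter (n : ℕ) (x : ℝ) : ℝ := (fun y => Int.fract y⁻¹)^[n] x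

/-- `pq n x` is the `(n+1)`-st continued fraction partial quotient `a_{n+1}(x)`. -/
noncomputable def pq (n : ℕ) (x : ℝ) : ℕ := ⌊(gaussIter n x)⁻¹⌋₊

/-- The rank-`k` cylinder `Δ(d_1, …, d_k)`, where `d i` stands for `d_{i+1}`. -/
noncomputable def cfCyl (k : ℕ) (d : ℕ → ℕ) : Set ℝ :=
  {x | x ∈ Set.Ioo (0 : ℝ) 1 ∧ Irrational x ∧ ∀ i < k, pq i x = d i}

/-- The constant-word cylinder `Δ_k(λ)`. -/
noncomputable def cfCylC (k : ℕ) (l : ℕ) : Set ℝ := cfCyl k (fun _ => l)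

open MeasureTheory

/-- The Gauss measure `μ(A) = (1/log 2) ∫_A dx/(1+x)` on `[0,1)`. -/
noncomputable def gaussMeasure : Measure ℝ :=
  (volume.restrict (Set.Ico (0 : ℝ) 1)).withDensity
    (fun x => ENNReal.ofReal (((1 + x) * Real.log 2)⁻¹))

/-- τ(λ) = (λ + √(λ²+4))/2. -/
noncomputable def tauCF (l : ℕ) : ℝ := (l + Real.sqrt (l ^ 2 + 4)) / 2

open Set

/-- `gaussBranch l` is the inverse of the Gauss map `x ↦ {1/x}` on `{x | pq 0 x = l}`. -/
noncomputable def gaussBranch (a x : ℝ) : ℝ := (a + x)⁻¹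

lemma pq_zero (x : ℝ) : pq 0 x = ⌊x⁻¹⌋₊ := rfl

lemma pq_succ (i : ℕ) (x : ℝ) : pq (i + 1) x = pq i (Int.fract x⁻¹) := rfl

lemma mapsTo_gaussBranch {a : ℝ} (ha : 1 ≤ a) : MapsTo (gaussBranch a) (Ioo 0 1) (Ioo 0 1) :=
  fun _ hx => ⟨inv_pos.2 (by linarith [hx.1]), inv_lt_one_of_one_lt₀ (by linarith [hx.1])⟩

lemma cfCylC_zero (l : ℕ) : cfCylC 0 l = Ioo 0 1 \ range ((↑) : ℚ → ℝ) := by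
  ext x
  simp [cfCylC, cfCyl, Irrational]

lemma cfCylC_succ {l : ℕ} (hl : 1 ≤ l) (k : ℕ) :
    cfCylC (k + 1) l = gaussBranch l '' cfCylC k l := by
  ext x
  constructor
  · rintro ⟨⟨hx0, -⟩, hx, hpq⟩
    have hfloor : ⌊x⁻¹⌋ = l := by
      rw [← Int.natCast_floor_eq_floor (inv_pos.2 hx0).le, ← pq_zero, hpq 0 k.succ_pos]
    have hy : Irrational (Int.fract x⁻¹) := hx.inv.sub_intCast _
    refine ⟨Int.fract x⁻¹, ⟨⟨(Int.fract_nonneg _).lt_of_ne' hy.ne_zero, Int.fract_lt_one _⟩, hy,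
      fun i hi => by rw [← pq_succ]; exact hpq (i + 1) (by omega)⟩, ?_⟩
    rw [gaussBranch, ← Int.cast_natCast, ← hfloor, Int.floor_add_fract, inv_inv]
  · rintro ⟨y, ⟨hy01, hy, hpq⟩, rfl⟩
    have hl' : (1 : ℝ) ≤ l := by exact_mod_cast hl
    have hfract : Int.fract ((l : ℝ) + y) = y := by
      rw [Int.fract_natCast_add, Int.fract_eq_self.2 ⟨hy01.1.le, hy01.2⟩]
    refine ⟨mapsTo_gaussBranch hl' hy01, (hy.natCast_add l).inv, ?_⟩
    rintro (_ | i) hi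
    · rw [pq_zero, gaussBranch, inv_inv, add_comm, Nat.floor_add_natCast hy01.1.le,
        Nat.floor_eq_zero.2 hy01.2, zero_add]
    · rw [pq_succ, gaussBranch, inv_inv, hfract]
      exact hpq i (by omega)

lemma cfCylC_eq_image {l : ℕ} (hl : 1 ≤ l) (k : ℕ) :
    cfCylC k l = (gaussBranch l)^[k] '' (Ioo 0 1 \ range ((↑) : ℚ → ℝ)) := by
  induction k with
  | zero => rw [cfCylC_zero, Function.iterate_zero, image_id]
  | succ k ih => rw [cfCylC_succ hl, ih, Function.iterate_succ', image_comp]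

lemma image_gaussBranch_Ioo {a x y : ℝ} (hx : 0 < a + x) (hy : 0 < a + y) :
    gaussBranch a '' Ioo x y = Ioo (gaussBranch a y) (gaussBranch a x) := by
  ext z
  simp only [mem_image, mem_Ioo, gaussBranch]
  constructor
  · rintro ⟨w, ⟨hxw, hwy⟩, rfl⟩
    exact ⟨inv_strictAnti₀ (by linarith) (by linarith), inv_strictAnti₀ hx (by linarith)⟩
  · rintro ⟨hyz, hzx⟩
    have hz : 0 < z := (inv_pos.2 hy).trans hyz
    refine ⟨z⁻¹ - a, ⟨?_, ?_⟩, by rw [add_sub_cancel, inv_inv]⟩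
    · linarith [(lt_inv_comm₀ hz hx).1 hzx]
    · linarith [(inv_lt_comm₀ hy hz).1 hyz]

lemma image_gaussBranch_uIoo {a x y : ℝ} (hx : 0 < a + x) (hy : 0 < a + y) :
    gaussBranch a '' uIoo x y = uIoo (gaussBranch a x) (gaussBranch a y) := by
  rcases le_total x y with hxy | hyx
  · rw [uIoo_of_le hxy, image_gaussBranch_Ioo hx hy, uIoo_comm]
    exact (uIoo_of_le (inv_anti₀ hx (by linarith))).symm
  · rw [uIoo_of_ge hyx, image_gaussBranch_Ioo hy hx]
    exact (uIoo_of_le (inv_anti₀ hy (by linarith))).symm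

lemma iterate_gaussBranch_nonneg {a x : ℝ} (ha : 0 ≤ a) (hx : 0 ≤ x) (k : ℕ) :
    0 ≤ (gaussBranch a)^[k] x := by
  induction k with
  | zero => exact hx
  | succ k ih => rw [Function.iterate_succ_apply']; exact inv_nonneg.2 (by linarith)

lemma iterate_gaussBranch_image_Ioo {a : ℝ} (ha : 0 < a) (k : ℕ) :
    (gaussBranch a)^[k] '' Ioo 0 1 = uIoo ((gaussBranch a)^[k] 0) ((gaussBranch a)^[k] 1) := by
  induction k with
  | zero => simp
  | succ k ih =>
    rw [Function.iterate_succ', image_comp, ih, Function.comp_apply, Function.comp_apply,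
      image_gaussBranch_uIoo]
    all_goals linarith [iterate_gaussBranch_nonneg ha.le zero_le_one k,
      iterate_gaussBranch_nonneg ha.le le_rfl k]

lemma gaussMeasure_absolutelyContinuous : gaussMeasure ≪ volume :=
  (withDensity_absolutelyContinuous _ _).trans
    (Measure.absolutelyContinuous_of_le Measure.restrict_le_self)

lemma gaussMeasure_cfCylC {l : ℕ} (hl : 1 ≤ l) (k : ℕ) :
    gaussMeasure (cfCylC k l) = gaussMeasure ((gaussBranch l)^[k] '' Ioo 0 1) := by
  set f := (gaussBranch l)^[k]
  have hnull : gaussMeasure (f '' range ((↑) : ℚ → ℝ)) = 0 :=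
    gaussMeasure_absolutelyContinuous (((countable_range _).image f).measure_zero volume)
  rw [cfCylC_eq_image hl]
  refine le_antisymm (measure_mono (image_mono sdiff_subset)) ?_
  calc gaussMeasure (f '' Ioo 0 1)
      ≤ gaussMeasure (f '' (Ioo 0 1 \ range ((↑) : ℚ → ℝ)) ∪ f '' range ((↑) : ℚ → ℝ)) :=
        measure_mono (by rw [← image_union]; exact image_mono (subset_sdiff_union _ _))
    _ ≤ gaussMeasure (f '' (Ioo 0 1 \ range ((↑) : ℚ → ℝ))) + 0 := hnull ▸ measure_union_le _ _
    _ = gaussMeasure (f '' (Ioo 0 1 \ range ((↑) : ℚ → ℝ))) := add_zero _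

lemma gaussMeasure_apply {s : Set ℝ} (hs : MeasurableSet s) :
    gaussMeasure s = ∫⁻ x in s ∩ Ico 0 1, ENNReal.ofReal (((1 + x) * log 2)⁻¹) := by
  rw [gaussMeasure, withDensity_apply _ hs, Measure.restrict_restrict hs]

lemma le_gaussMeasure {s : Set ℝ} (hs : MeasurableSet s) (hs01 : s ⊆ Ico 0 1) :
    ENNReal.ofReal (2 * log 2)⁻¹ * volume s ≤ gaussMeasure s := by
  rw [gaussMeasure_apply hs, inter_eq_left.2 hs01, ← setLIntegral_const]
  refine setLIntegral_mono' hs fun x hx => ENNReal.ofReal_le_ofReal ?_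
  have hx01 := hs01 hx
  have hlog : 0 < log 2 := log_pos one_lt_two
  exact inv_anti₀ (by nlinarith [hx01.1]) (by nlinarith [hx01.2])

lemma gaussMeasure_le {s : Set ℝ} (hs : MeasurableSet s) :
    gaussMeasure s ≤ ENNReal.ofReal (log 2)⁻¹ * volume s := by
  have hlog : 0 < log 2 := log_pos one_lt_two
  rw [gaussMeasure_apply hs]
  calc ∫⁻ x in s ∩ Ico 0 1, ENNReal.ofReal (((1 + x) * log 2)⁻¹)
      ≤ ∫⁻ _ in s ∩ Ico 0 1, ENNReal.ofReal (log 2)⁻¹ :=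
        setLIntegral_mono' (hs.inter measurableSet_Ico) fun x hx =>
          ENNReal.ofReal_le_ofReal (inv_anti₀ hlog (by nlinarith [hx.2.1]))
    _ = ENNReal.ofReal (log 2)⁻¹ * volume (s ∩ Ico 0 1) := setLIntegral_const _ _
    _ ≤ ENNReal.ofReal (log 2)⁻¹ * volume s := by gcongr; exact inter_subset_left

def IsContinuantSeq (a : ℝ) (u : ℕ → ℝ) : Prop := ∀ n, u (n + 2) = a * u (n + 1) + u n

noncomputable def continuantSeq (a x y : ℝ) : ℕ → ℝ
  | 0 => x
  | 1 => y
  | n + 2 => a * continuantSeq a x y (n + 1) + continuantSeq a x y n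

lemma isContinuantSeq_continuantSeq (a x y : ℝ) : IsContinuantSeq a (continuantSeq a x y) :=
  fun _ => rfl

lemma isContinuantSeq_pow {a τ : ℝ} (hτ : τ ^ 2 = a * τ + 1) : IsContinuantSeq a (τ ^ ·) :=
  fun n => by linear_combination τ ^ n * hτ

namespace IsContinuantSeq

variable {a : ℝ} {u v : ℕ → ℝ}

lemma shift (hu : IsContinuantSeq a u) : IsContinuantSeq a (fun n => u (n + 1)) :=
  fun n => hu (n + 1)

lemma const_mul (hu : IsContinuantSeq a u) (c : ℝ) : IsContinuantSeq a (fun n => c * u n) :=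
  fun n => by simp only [hu n]; ring

lemma le_of_le_of_le (ha : 0 ≤ a) (hu : IsContinuantSeq a u) (hv : IsContinuantSeq a v)
    (h0 : u 0 ≤ v 0) (h1 : u 1 ≤ v 1) (n : ℕ) : u n ≤ v n := by
  suffices ∀ n, u n ≤ v n ∧ u (n + 1) ≤ v (n + 1) from (this n).1
  intro n
  induction n with
  | zero => exact ⟨h0, h1⟩
  | succ n ih =>
    refine ⟨ih.2, ?_⟩
    rw [hu n, hv n]
    nlinarith [mul_le_mul_of_nonneg_left ih.2 ha, ih.1]

lemma pos (ha : 0 ≤ a) (hu : IsContinuantSeq a u) (h0 : 0 < u 0) (h1 : 0 < u 1) (n : ℕ) :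
    0 < u n := by
  suffices ∀ n, 0 < u n ∧ 0 < u (n + 1) from (this n).1
  intro n
  induction n with
  | zero => exact ⟨h0, h1⟩
  | succ n ih =>
    refine ⟨ih.2, ?_⟩
    rw [hu n]
    nlinarith [mul_nonneg ha ih.2.le, ih.1]

lemma wronskian (hu : IsContinuantSeq a u) (hv : IsContinuantSeq a v) (n : ℕ) :
    u n * v (n + 1) - u (n + 1) * v n = (-1) ^ n * (u 0 * v 1 - u 1 * v 0) := by
  induction n with
  | zero => ring
  | succ n ih =>
    rw [hu n, hv n, pow_succ, mul_comm _ (-1 : ℝ), mul_assoc, ← ih]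
    ring

lemma iterate_gaussBranch (hu : IsContinuantSeq a u) (hu₀ : ∀ n, u (n + 1) ≠ 0) (n : ℕ) :
    (gaussBranch a)^[n] (u 0 / u 1) = u n / u (n + 1) := by
  induction n with
  | zero => rfl
  | succ n ih =>
    rw [Function.iterate_succ_apply', ih, gaussBranch, hu n]
    field_simp [hu₀ n]

end IsContinuantSeq

section ContinuantSeq

variable {a τ : ℝ}

@[simp] lemma continuantSeq_zero (a x y : ℝ) : continuantSeq a x y 0 = x := rfl

@[simp] lemma continuantSeq_one (a x y : ℝ) : continuantSeq a x y 1 = y := rfl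

@[simp] lemma continuantSeq_two (a x y : ℝ) : continuantSeq a x y 2 = a * y + x := rfl

lemma continuantSeq_zero_one_pos (ha : 0 < a) (n : ℕ) : 0 < continuantSeq a 0 1 (n + 1) :=
  (isContinuantSeq_continuantSeq a 0 1).shift.pos ha.le one_pos (by simpa using ha) n

lemma continuantSeq_one_one_pos (ha : 0 ≤ a) (n : ℕ) : 0 < continuantSeq a 1 1 n :=
  (isContinuantSeq_continuantSeq a 1 1).pos ha one_pos one_pos n

lemma abs_iterate_gaussBranch_one_sub_zero (ha : 0 < a) (k : ℕ) :
    |(gaussBranch a)^[k] 1 - (gaussBranch a)^[k] 0| =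
      (continuantSeq a 0 1 (k + 1) * continuantSeq a 1 1 (k + 1))⁻¹ := by
  set F := continuantSeq a 0 1
  set G := continuantSeq a 1 1
  have hF : IsContinuantSeq a F := isContinuantSeq_continuantSeq a 0 1
  have hG : IsContinuantSeq a G := isContinuantSeq_continuantSeq a 1 1
  have hFpos : ∀ n, 0 < F (n + 1) := continuantSeq_zero_one_pos ha
  have hGpos : ∀ n, 0 < G n := continuantSeq_one_one_pos ha.le
  have h0 : (gaussBranch a)^[k] 0 = F k / F (k + 1) := by
    simpa [F] using hF.iterate_gaussBranch (fun n => (hFpos n).ne') k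
  have h1 : (gaussBranch a)^[k] 1 = G k / G (k + 1) := by
    simpa [G] using hG.iterate_gaussBranch (fun n => (hGpos _).ne') k
  have hnum : |G k * F (k + 1) - G (k + 1) * F k| = 1 := by
    rw [show G k * F (k + 1) - G (k + 1) * F k = -(F k * G (k + 1) - F (k + 1) * G k) by ring,
      hF.wronskian hG]
    simp [F, G]
  rw [h0, h1, div_sub_div _ _ (hGpos _).ne' (hFpos k).ne', abs_div, hnum,
    abs_of_pos (mul_pos (hGpos _) (hFpos k)), one_div, mul_comm]

lemma continuantSeq_zero_one_le (ha : 0 ≤ a) (hτ : 0 < τ) (hτa : τ ^ 2 = a * τ + 1) (n : ℕ) :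
    continuantSeq a 0 1 (n + 1) ≤ τ ^ n :=
  (isContinuantSeq_continuantSeq a 0 1).shift.le_of_le_of_le ha (isContinuantSeq_pow hτa)
    (by simp) (by simp; nlinarith) n

lemma le_continuantSeq_zero_one (ha : 0 ≤ a) (hτ : 0 < τ) (hτa : τ ^ 2 = a * τ + 1) (n : ℕ) :
    a * τ ^ n ≤ τ * continuantSeq a 0 1 (n + 1) :=
  ((isContinuantSeq_pow hτa).const_mul a).le_of_le_of_le ha
    ((isContinuantSeq_continuantSeq a 0 1).shift.const_mul τ) (by simp; nlinarith)
    (by simp [mul_comm]) n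

lemma continuantSeq_one_one_le (ha : 0 ≤ a) (hτa : τ ^ 2 = a * τ + 1) (n : ℕ) :
    τ * continuantSeq a 1 1 (n + 1) ≤ (τ + 1) * τ ^ n :=
  ((isContinuantSeq_continuantSeq a 1 1).shift.const_mul τ).le_of_le_of_le ha
    ((isContinuantSeq_pow hτa).const_mul (τ + 1)) (by simp) (by simp; nlinarith) n

lemma le_continuantSeq_one_one (ha : 0 ≤ a) (hτ : 0 < τ) (hτa : τ ^ 2 = a * τ + 1) (n : ℕ) :
    a * (τ + 1) * τ ^ n ≤ τ * continuantSeq a 1 1 (n + 2) :=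
  ((isContinuantSeq_pow hτa).const_mul (a * (τ + 1))).le_of_le_of_le ha
    ((isContinuantSeq_continuantSeq a 1 1).shift.shift.const_mul τ) (by simp; nlinarith)
    (by simp [isContinuantSeq_continuantSeq a 1 1 1]; nlinarith) n

lemma mul_continuantSeq_le (ha : 0 ≤ a) (hτ : 0 < τ) (hτa : τ ^ 2 = a * τ + 1) (k : ℕ) :
    τ * (continuantSeq a 0 1 (k + 1) * continuantSeq a 1 1 (k + 1)) ≤ (τ + 1) * τ ^ (2 * k) := by
  have hG := continuantSeq_one_one_pos ha (k + 1)
  calc τ * (continuantSeq a 0 1 (k + 1) * continuantSeq a 1 1 (k + 1))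
      = continuantSeq a 0 1 (k + 1) * (τ * continuantSeq a 1 1 (k + 1)) := by ring
    _ ≤ τ ^ k * ((τ + 1) * τ ^ k) :=
        mul_le_mul (continuantSeq_zero_one_le ha hτ hτa k) (continuantSeq_one_one_le ha hτa k)
          (by positivity) (by positivity)
    _ = (τ + 1) * τ ^ (2 * k) := by ring

lemma le_mul_continuantSeq (ha : 0 ≤ a) (hτ : 0 < τ) (hτa : τ ^ 2 = a * τ + 1) (k : ℕ) :
    a ^ 2 * (τ + 1) * τ ^ (2 * (k + 1)) ≤
      (a ^ 2 + 4) * τ * (continuantSeq a 0 1 (k + 2) * continuantSeq a 1 1 (k + 2)) := by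
  have hF := le_continuantSeq_zero_one ha hτ hτa (k + 1)
  have hG := le_continuantSeq_one_one ha hτ hτa k
  have hFG : a * τ ^ (k + 1) * (a * (τ + 1) * τ ^ k) ≤
      τ * continuantSeq a 0 1 (k + 2) * (τ * continuantSeq a 1 1 (k + 2)) :=
    mul_le_mul hF hG (by positivity) ((by positivity : 0 ≤ a * τ ^ (k + 1)).trans hF)
  have haτ : a ≤ τ := by nlinarith
  have hτ2 : τ ^ 2 ≤ a ^ 2 + 4 := by nlinarith [mul_le_mul_of_nonneg_right haτ (sub_nonneg.2 haτ)]
  have hprod : 0 ≤ τ * (continuantSeq a 0 1 (k + 2) * continuantSeq a 1 1 (k + 2)) := by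
    nlinarith [(by positivity : 0 ≤ a * τ ^ (k + 1) * (a * (τ + 1) * τ ^ k))]
  calc a ^ 2 * (τ + 1) * τ ^ (2 * (k + 1))
      = τ * (a * τ ^ (k + 1) * (a * (τ + 1) * τ ^ k)) := by ring
    _ ≤ τ * (τ * continuantSeq a 0 1 (k + 2) * (τ * continuantSeq a 1 1 (k + 2))) := by gcongr
    _ = τ ^ 2 * (τ * (continuantSeq a 0 1 (k + 2) * continuantSeq a 1 1 (k + 2))) := by ring
    _ ≤ (a ^ 2 + 4) * (τ * (continuantSeq a 0 1 (k + 2) * continuantSeq a 1 1 (k + 2))) := by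
        gcongr
    _ = _ := by ring

end ContinuantSeq

lemma tauCF_pos (l : ℕ) : 0 < tauCF l := by
  unfold tauCF
  positivity

lemma tauCF_sq (l : ℕ) : tauCF l ^ 2 = l * tauCF l + 1 := by
  unfold tauCF
  linear_combination Real.sq_sqrt (by positivity : (0 : ℝ) ≤ (l : ℝ) ^ 2 + 4) / 4

/-- Two-sided exponential bounds for the Gauss measure of `Δ_k(λ)`,
with the explicit constants `c₋ = τ/(2 log 2 (τ+1))`, `c₊ = (λ²+4)τ/((τ+1)λ² log 2)`. -/
theorem gaussMeasure_cfCylC_bounds (l : ℕ) (hl : 1 ≤ l) :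
    ∃ cm cp : ℝ, 0 < cm ∧ 0 < cp ∧
      cm = tauCF l / (2 * Real.log 2 * (tauCF l + 1)) ∧
      cp = ((l : ℝ) ^ 2 + 4) * tauCF l / ((tauCF l + 1) * (l : ℝ) ^ 2 * Real.log 2) ∧
      ∀ k : ℕ, 1 ≤ k →
        ENNReal.ofReal (cm * tauCF l ^ (-(2 * k : ℤ))) ≤ gaussMeasure (cfCylC k l) ∧
        gaussMeasure (cfCylC k l) ≤ ENNReal.ofReal (cp * tauCF l ^ (-(2 * k : ℤ))) := by
  have hτ := tauCF_pos l
  have hτl := tauCF_sq l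
  have hlog : 0 < log 2 := log_pos one_lt_two
  have hl₀ : (0 : ℝ) < l := by exact_mod_cast hl
  refine ⟨_, _, by positivity, by positivity, rfl, rfl, fun k hk => ?_⟩
  obtain ⟨m, rfl⟩ := Nat.exists_eq_add_of_le' hk
  have hFG : 0 < continuantSeq l 0 1 (m + 1 + 1) * continuantSeq l 1 1 (m + 1 + 1) :=
    mul_pos (continuantSeq_zero_one_pos hl₀ _) (continuantSeq_one_one_pos hl₀.le _)
  have hzpow : tauCF l ^ (-(2 * (m + 1 : ℕ) : ℤ)) = (tauCF l ^ (2 * (m + 1)))⁻¹ := by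
    rw [zpow_neg]; norm_cast
  have hI : (gaussBranch l)^[m + 1] '' Ioo 0 1 ⊆ Ico 0 1 :=
    ((mapsTo_gaussBranch (by exact_mod_cast hl)).iterate _).image_subset.trans Ioo_subset_Ico_self
  rw [gaussMeasure_cfCylC hl, hzpow, iterate_gaussBranch_image_Ioo hl₀]
  rw [iterate_gaussBranch_image_Ioo hl₀] at hI
  have hvol := abs_iterate_gaussBranch_one_sub_zero hl₀ (m + 1)
  constructor
  · refine le_trans ?_ (le_gaussMeasure measurableSet_Ioo hI)
    rw [Real.volume_uIoo, hvol, ← ENNReal.ofReal_mul (by positivity)]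
    refine ENNReal.ofReal_le_ofReal ?_
    field_simp
    exact (le_div_iff₀ hFG).2 (mul_continuantSeq_le hl₀.le hτ hτl (m + 1))
  · refine (gaussMeasure_le (s := uIoo _ _) measurableSet_Ioo).trans ?_
    rw [Real.volume_uIoo, hvol, ← ENNReal.ofReal_mul (by positivity)]
    refine ENNReal.ofReal_le_ofReal ?_
    field_simp
    exact (div_le_iff₀ hFG).2 (le_mul_continuantSeq hl₀.le hτ hτl m)
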